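/- arXiv:1302.0615 — 5 statements merged into one kernel-verified Lean document; each statement's English description precedes it below -/
import Mathlib

section
/- Suppose r : ℕ × ℤ × ℤ → ℚ satisfies r(n,i,j) = 0 whenever i ∉ {0,…,n−1} or j ∉ {0,…,n−1}, and for all n ≥ 1 and all 0 ≤ i,j ≤ n−1, r(n,i,j) = (1/2) · Σ_{k,l ∈ {0,1}} r(n−1, i−k, j−l) + (1/2)·(1 if (i,j) = (0,0), else 0). Then for all n ≥ 0 and all 0 ≤ i,j ≤ n−1, r(n,i,j) = (1/2) · Σ_{m=0}^{n−1} 2^{−m} · binom(m,i) · binom(m,j), where binom denotes the binomial coefficient. -/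
/-!
The right-hand side is the unique solution: the support condition and the recurrence determine
`r n` from `r (n - 1)`, so two solutions agree by induction on `n`. The closed form is a solution
because Pascal's rule in each index turns the four shifted sums of `closedForm n` into the
terms `m + 1` of `closedForm (n + 1)` with the extra factor `2`, while its `m = 0` term is the
source `if (i, j) = (0, 0) then 1 else 0`.
-/

open Finset

-- The guard matters: `Int.toNat` sends negative integers to `0`, where `Nat.choose m 0 = 1`.
def zchoose (m : ℕ) (i : ℤ) : ℚ := if 0 ≤ i then (m.choose i.toNat : ℚ) else 0

lemma zchoose_of_neg {i : ℤ} (hi : i < 0) (m : ℕ) : zchoose m i = 0 := by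
  simp [zchoose, hi.not_ge]

lemma zchoose_of_lt {m : ℕ} {i : ℤ} (h : (m : ℤ) < i) : zchoose m i = 0 := by
  rw [zchoose, if_pos (by omega), Nat.choose_eq_zero_of_lt (by omega), Nat.cast_zero]

lemma zchoose_zero_left (i : ℤ) : zchoose 0 i = if i = 0 then 1 else 0 := by
  rcases lt_trichotomy i 0 with hi | rfl | hi
  · rw [zchoose_of_neg hi, if_neg hi.ne]
  · simp [zchoose]
  · rw [zchoose_of_lt (by simpa using hi), if_neg hi.ne']

lemma zchoose_succ (m : ℕ) (i : ℤ) : zchoose (m + 1) i = zchoose m i + zchoose m (i - 1) := by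
  rcases lt_trichotomy i 0 with hi | rfl | hi
  · rw [zchoose_of_neg hi, zchoose_of_neg hi, zchoose_of_neg (by omega), add_zero]
  · simp [zchoose]
  · obtain ⟨k, rfl⟩ : ∃ k : ℕ, i = k + 1 := ⟨i.toNat - 1, by omega⟩
    have hk : (0 : ℤ) ≤ k + 1 := by omega
    simp [zchoose, hk, Nat.choose_succ_succ, add_comm]

def closedForm (n : ℕ) (i j : ℤ) : ℚ :=
  (1 / 2) * ∑ m ∈ range n, ((2 : ℚ) ^ m)⁻¹ * zchoose m i * zchoose m j

lemma zchoose_eq_zero_of_lt_of_not_mem {m n : ℕ} (hm : m < n) {i : ℤ}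
    (hi : ¬(0 ≤ i ∧ i ≤ (n : ℤ) - 1)) : zchoose m i = 0 := by
  rcases not_and_or.1 hi with hi | hi
  · exact zchoose_of_neg (not_le.1 hi) m
  · exact zchoose_of_lt (by omega)

lemma closedForm_eq_zero (n : ℕ) (i j : ℤ)
    (h : ¬(0 ≤ i ∧ i ≤ (n : ℤ) - 1) ∨ ¬(0 ≤ j ∧ j ≤ (n : ℤ) - 1)) : closedForm n i j = 0 := by
  have vanish : ∀ m < n, zchoose m i * zchoose m j = 0 := fun m hm =>
    h.elim (fun hi => by rw [zchoose_eq_zero_of_lt_of_not_mem hm hi, zero_mul])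
      (fun hj => by rw [zchoose_eq_zero_of_lt_of_not_mem hm hj, mul_zero])
  rw [closedForm, sum_eq_zero fun m hm => by rw [mul_assoc, vanish m (mem_range.1 hm), mul_zero],
    mul_zero]

lemma sum_closedForm_shift (n : ℕ) (i j : ℤ) :
    ∑ k ∈ range 2, ∑ l ∈ range 2, closedForm n (i - k) (j - l) =
      (1 / 2) * ∑ m ∈ range n, ((2 : ℚ) ^ m)⁻¹ * zchoose (m + 1) i * zchoose (m + 1) j := by
  simp only [closedForm, zchoose_succ, sum_range_succ, sum_range_zero, zero_add, Nat.cast_zero,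
    Nat.cast_one, sub_zero, ← mul_add, ← sum_add_distrib]
  congr 1
  exact sum_congr rfl fun m _ => by ring

lemma closedForm_succ (n : ℕ) (i j : ℤ) :
    closedForm (n + 1) i j =
      (1 / 2) * (∑ k ∈ range 2, ∑ l ∈ range 2, closedForm n (i - k) (j - l))
        + (1 / 2) * (if (i, j) = (0, 0) then 1 else 0) := by
  have initial : zchoose 0 i * zchoose 0 j = if (i, j) = (0, 0) then 1 else 0 := by
    simp only [zchoose_zero_left, Prod.mk.injEq, ite_mul, one_mul, zero_mul, ite_and]
  rw [sum_closedForm_shift, closedForm, sum_range_succ', pow_zero, inv_one, one_mul, initial,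
    mul_add]
  congr 1
  rw [mul_sum, mul_sum, mul_sum]
  exact sum_congr rfl fun m _ => by rw [pow_succ, mul_inv]; ring

def SolvesBoundaryRecurrence (r : ℕ → ℤ → ℤ → ℚ) : Prop :=
  (∀ (n : ℕ) (i j : ℤ),
      ¬(0 ≤ i ∧ i ≤ (n : ℤ) - 1) ∨ ¬(0 ≤ j ∧ j ≤ (n : ℤ) - 1) → r n i j = 0) ∧
    ∀ (n : ℕ), 1 ≤ n → ∀ (i j : ℤ),
      0 ≤ i → i ≤ (n : ℤ) - 1 → 0 ≤ j → j ≤ (n : ℤ) - 1 →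
      r n i j =
        (1 / 2) * (∑ k ∈ Finset.range 2, ∑ l ∈ Finset.range 2, r (n - 1) (i - k) (j - l))
        + (1 / 2) * (if (i, j) = (0, 0) then 1 else 0)

theorem SolvesBoundaryRecurrence.unique {r s : ℕ → ℤ → ℤ → ℚ} (hr : SolvesBoundaryRecurrence r)
    (hs : SolvesBoundaryRecurrence s) : r = s := by
  funext n
  induction n with
  | zero => funext i j; rw [hr.1 0 i j (by omega), hs.1 0 i j (by omega)]
  | succ n ih =>
    funext i j
    by_cases h : (0 ≤ i ∧ i ≤ ((n + 1 : ℕ) : ℤ) - 1) ∧ (0 ≤ j ∧ j ≤ ((n + 1 : ℕ) : ℤ) - 1)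
    · rw [hr.2 (n + 1) n.succ_pos i j h.1.1 h.1.2 h.2.1 h.2.2,
        hs.2 (n + 1) n.succ_pos i j h.1.1 h.1.2 h.2.1 h.2.2, Nat.add_sub_cancel, ih]
    · rw [hr.1 _ i j (not_and_or.1 h), hs.1 _ i j (not_and_or.1 h)]

theorem solvesBoundaryRecurrence_closedForm : SolvesBoundaryRecurrence closedForm := by
  refine ⟨closedForm_eq_zero, fun n hn i j _ _ _ _ => ?_⟩
  obtain ⟨n, rfl⟩ := Nat.exists_eq_add_of_le' hn
  rw [closedForm_succ, Nat.add_sub_cancel]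

/-- The boundary recurrence for the ratios `Z(i,j,n)/Z_n` of the
uniformly weighted Aztec diamond has the closed-form solution
`r(n,i,j) = (1/2) · Σ_{m=0}^{n−1} 2^{−m} · C(m,i) · C(m,j)`. -/
theorem aztec_uniform_boundary_recurrence_solution (r : ℕ → ℤ → ℤ → ℚ)
    (hzero : ∀ (n : ℕ) (i j : ℤ),
      ¬(0 ≤ i ∧ i ≤ (n : ℤ) - 1) ∨ ¬(0 ≤ j ∧ j ≤ (n : ℤ) - 1) → r n i j = 0)
    (hrec : ∀ (n : ℕ), 1 ≤ n → ∀ (i j : ℤ),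
      0 ≤ i → i ≤ (n : ℤ) - 1 → 0 ≤ j → j ≤ (n : ℤ) - 1 →
      r n i j =
        (1 / 2) * (∑ k ∈ Finset.range 2, ∑ l ∈ Finset.range 2, r (n - 1) (i - k) (j - l))
        + (1 / 2) * (if (i, j) = (0, 0) then 1 else 0)) :
    ∀ (n : ℕ) (i j : ℤ), 0 ≤ i → i ≤ (n : ℤ) - 1 → 0 ≤ j → j ≤ (n : ℤ) - 1 →
      r n i j =
        (1 / 2) * ∑ m ∈ Finset.range n,
          ((2 : ℚ) ^ m)⁻¹ * (m.choose i.toNat) * (m.choose j.toNat) := by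
  intro n i j hi _ hj _
  rw [SolvesBoundaryRecurrence.unique ⟨hzero, hrec⟩ solvesBoundaryRecurrence_closedForm]
  simp only [closedForm, zchoose, if_pos hi, if_pos hj]
end

section
/- Let a be a complex number with 1 + a² ≠ 0. Suppose r : ℕ × ℤ × ℤ → ℂ satisfies r(n,i,j) = 0 whenever i ∉ {0,…,n−1} or j ∉ {0,…,n−1}, and for all n ≥ 1 and all 0 ≤ i,j ≤ n−1, r(n,i,j) = (1/(1+a²)) · Σ_{k,l ∈ {0,1}} a^{k+l} · r(n−1, i−k, j−l) + (a/(1+a²)) · (1 if (i,j) = (0,0), else 0). Then for all n ≥ 0 and all 0 ≤ i,j ≤ n−1, r(n,i,j) = (a^{1+i+j}/(1+a²)) · Σ_{m=0}^{n−1} binom(m,i) · binom(m,j) · (1+a²)^{−m}. -/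
/-!
Write `q = 1 + a²`. The candidate `F n i j = (a / q) · Σ_{m<n} a^i C(m,i) · a^j C(m,j) · q^{-m}`
vanishes outside the box `0 ≤ i, j ≤ n - 1`, and Pascal's rule
`a^i C(m+1,i) = a^i C(m,i) + a · a^(i-1) C(m,i-1)`, applied in each variable to the terms
`m ≥ 1` of the sum, shows that it satisfies the recurrence; the `m = 0` term supplies the source
`a / q` at `(0,0)`. A function vanishing outside the box is determined by the recurrence,
so `r = F`.
-/

namespace AztecBoundary

variable {R : Type*} [CommSemiring R]

/-- The coefficient of `w ^ i` in `(1 + a w) ^ m`, for an integer `i`. -/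
def scaledChoose (a : R) (m : ℕ) (i : ℤ) : R :=
  if 0 ≤ i then a ^ i.toNat * m.choose i.toNat else 0

theorem scaledChoose_eq_zero {a : R} {m : ℕ} {i : ℤ} (hi : i < 0 ∨ (m : ℤ) < i) :
    scaledChoose a m i = 0 := by
  unfold scaledChoose
  split_ifs
  · rw [Nat.choose_eq_zero_of_lt (by omega), Nat.cast_zero, mul_zero]
  · rfl

theorem scaledChoose_zero_left (a : R) (i : ℤ) :
    scaledChoose a 0 i = if i = 0 then 1 else 0 := by
  by_cases hi : i = 0
  · simp [scaledChoose, hi]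
  · rw [if_neg hi, scaledChoose_eq_zero (by omega)]

theorem scaledChoose_succ (a : R) (m : ℕ) (i : ℤ) :
    scaledChoose a (m + 1) i = scaledChoose a m i + a * scaledChoose a m (i - 1) := by
  rcases lt_trichotomy i 0 with hi | rfl | hi
  · simp [scaledChoose_eq_zero (Or.inl hi), scaledChoose_eq_zero (Or.inl (by omega : i - 1 < 0))]
  · simp [scaledChoose]
  · obtain ⟨k, rfl⟩ : ∃ k : ℕ, i = k + 1 := ⟨(i - 1).toNat, by omega⟩
    simp only [scaledChoose, add_sub_cancel_right, Int.toNat_natCast, Int.natCast_nonneg,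
      if_true, show (0 : ℤ) ≤ k + 1 by omega, show ((k : ℤ) + 1).toNat = k + 1 by omega,
      Nat.choose_succ_succ', Nat.cast_add]
    ring

variable {K : Type*} [Field K]

structure IsBoundarySolution (a : K) (r : ℕ → ℤ → ℤ → K) : Prop where
  eq_zero : ∀ (n : ℕ) (i j : ℤ),
    ¬(0 ≤ i ∧ i ≤ (n : ℤ) - 1) ∨ ¬(0 ≤ j ∧ j ≤ (n : ℤ) - 1) → r n i j = 0
  recurrence : ∀ (n : ℕ), 1 ≤ n → ∀ (i j : ℤ),
    0 ≤ i → i ≤ (n : ℤ) - 1 → 0 ≤ j → j ≤ (n : ℤ) - 1 →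
    r n i j =
      (1 / (1 + a ^ 2)) *
        (∑ k ∈ Finset.range 2, ∑ l ∈ Finset.range 2,
          a ^ (k + l) * r (n - 1) (i - k) (j - l))
      + (a / (1 + a ^ 2)) * (if (i, j) = (0, 0) then 1 else 0)

namespace IsBoundarySolution

theorem unique {a : K} {r s : ℕ → ℤ → ℤ → K} (hr : IsBoundarySolution a r)
    (hs : IsBoundarySolution a s) : r = s := by
  funext n
  induction n with
  | zero => funext i j; rw [hr.eq_zero 0 i j (by omega), hs.eq_zero 0 i j (by omega)]
  | succ n ih =>
    funext i j
    by_cases hbox : (0 ≤ i ∧ i ≤ ((n + 1 : ℕ) : ℤ) - 1) ∧ (0 ≤ j ∧ j ≤ ((n + 1 : ℕ) : ℤ) - 1)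
    · obtain ⟨⟨hi₀, hi₁⟩, hj₀, hj₁⟩ := hbox
      rw [hr.recurrence _ n.succ_pos _ _ hi₀ hi₁ hj₀ hj₁,
        hs.recurrence _ n.succ_pos _ _ hi₀ hi₁ hj₀ hj₁, Nat.succ_sub_one, ih]
    · rw [hr.eq_zero _ i j (by tauto), hs.eq_zero _ i j (by tauto)]

end IsBoundarySolution

def boundaryClosedForm (a : K) (n : ℕ) (i j : ℤ) : K :=
  a / (1 + a ^ 2) *
    ∑ m ∈ Finset.range n, scaledChoose a m i * scaledChoose a m j * ((1 + a ^ 2) ^ m)⁻¹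

theorem boundaryClosedForm_succ (a : K) (n : ℕ) (i j : ℤ) :
    boundaryClosedForm a (n + 1) i j =
      (1 / (1 + a ^ 2)) *
        (∑ k ∈ Finset.range 2, ∑ l ∈ Finset.range 2,
          a ^ (k + l) * boundaryClosedForm a n (i - k) (j - l))
      + (a / (1 + a ^ 2)) * (if (i, j) = (0, 0) then 1 else 0) := by
  have hsource : scaledChoose a 0 i * scaledChoose a 0 j = if (i, j) = (0, 0) then 1 else 0 := by
    simp only [scaledChoose_zero_left, Prod.mk.injEq]
    split_ifs <;> simp_all
  rw [boundaryClosedForm, Finset.sum_range_succ' _ n, hsource, mul_add]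
  simp only [Finset.sum_range_succ, Finset.sum_range_zero, zero_add, Nat.cast_zero,
    Nat.cast_one, sub_zero, pow_zero, inv_one, mul_one, boundaryClosedForm, Finset.mul_sum,
    ← Finset.sum_add_distrib]
  congr 1
  refine Finset.sum_congr rfl fun m _ => ?_
  rw [scaledChoose_succ, scaledChoose_succ, pow_succ (1 + a ^ 2) m, mul_inv]
  ring

theorem isBoundarySolution_boundaryClosedForm (a : K) :
    IsBoundarySolution a (boundaryClosedForm a) where
  eq_zero n i j hout := by
    refine mul_eq_zero_of_right _ (Finset.sum_eq_zero fun m hm => ?_)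
    rw [Finset.mem_range] at hm
    rcases hout with hi | hj
    · rw [scaledChoose_eq_zero (by omega), zero_mul, zero_mul]
    · rw [scaledChoose_eq_zero (a := a) (i := j) (by omega), mul_zero, zero_mul]
  recurrence n hn i j _ _ _ _ := by
    obtain ⟨n, rfl⟩ := Nat.exists_eq_add_of_le' hn
    exact boundaryClosedForm_succ a n i j

theorem boundaryClosedForm_of_nonneg (a : K) (n : ℕ) {i j : ℤ} (hi : 0 ≤ i) (hj : 0 ≤ j) :
    boundaryClosedForm a n i j =
      (a ^ (1 + i + j) / (1 + a ^ 2)) *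
        ∑ m ∈ Finset.range n,
          (m.choose i.toNat : K) * (m.choose j.toNat) * ((1 + a ^ 2) ^ m)⁻¹ := by
  lift i to ℕ using hi
  lift j to ℕ using hj
  rw [show (1 : ℤ) + i + j = ((1 + i + j : ℕ) : ℤ) by push_cast; ring, zpow_natCast]
  simp only [boundaryClosedForm, scaledChoose, Int.natCast_nonneg, if_true, Int.toNat_natCast,
    Finset.mul_sum]
  refine Finset.sum_congr rfl fun m _ => ?_
  ring

end AztecBoundary

open AztecBoundary

theorem aztec_biased_boundary_recurrence_solution_general (a : ℂ)
    (r : ℕ → ℤ → ℤ → ℂ)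
    (hzero : ∀ (n : ℕ) (i j : ℤ),
      ¬(0 ≤ i ∧ i ≤ (n : ℤ) - 1) ∨ ¬(0 ≤ j ∧ j ≤ (n : ℤ) - 1) → r n i j = 0)
    (hrec : ∀ (n : ℕ), 1 ≤ n → ∀ (i j : ℤ),
      0 ≤ i → i ≤ (n : ℤ) - 1 → 0 ≤ j → j ≤ (n : ℤ) - 1 →
      r n i j =
        (1 / (1 + a ^ 2)) *
          (∑ k ∈ Finset.range 2, ∑ l ∈ Finset.range 2,
            a ^ (k + l) * r (n - 1) (i - k) (j - l))
        + (a / (1 + a ^ 2)) * (if (i, j) = (0, 0) then 1 else 0)) :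
    ∀ (n : ℕ) (i j : ℤ), 0 ≤ i → i ≤ (n : ℤ) - 1 → 0 ≤ j → j ≤ (n : ℤ) - 1 →
      r n i j =
        (a ^ (1 + i + j) / (1 + a ^ 2)) *
          ∑ m ∈ Finset.range n,
            (m.choose i.toNat : ℂ) * (m.choose j.toNat) * ((1 + a ^ 2) ^ m)⁻¹ := by
  intro n i j hi _ hj _
  have hr : r = boundaryClosedForm a :=
    IsBoundarySolution.unique ⟨hzero, hrec⟩ (isBoundarySolution_boundaryClosedForm a)
  rw [hr, boundaryClosedForm_of_nonneg a n hi hj]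

/-- The boundary recurrence for the ratios `Z(i,j,a,n)/Z_n(a)` of the
one-periodic (bias `a`) Aztec diamond has the closed-form solution
`r(n,i,j) = (a^{1+i+j}/(1+a²)) · Σ_{m=0}^{n−1} C(m,i)·C(m,j)·(1+a²)^{−m}`. -/
theorem aztec_biased_boundary_recurrence_solution (a : ℂ) (ha : 1 + a ^ 2 ≠ 0)
    (r : ℕ → ℤ → ℤ → ℂ)
    (hzero : ∀ (n : ℕ) (i j : ℤ),
      ¬(0 ≤ i ∧ i ≤ (n : ℤ) - 1) ∨ ¬(0 ≤ j ∧ j ≤ (n : ℤ) - 1) → r n i j = 0)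
    (hrec : ∀ (n : ℕ), 1 ≤ n → ∀ (i j : ℤ),
      0 ≤ i → i ≤ (n : ℤ) - 1 → 0 ≤ j → j ≤ (n : ℤ) - 1 →
      r n i j =
        (1 / (1 + a ^ 2)) *
          (∑ k ∈ Finset.range 2, ∑ l ∈ Finset.range 2,
            a ^ (k + l) * r (n - 1) (i - k) (j - l))
        + (a / (1 + a ^ 2)) * (if (i, j) = (0, 0) then 1 else 0)) :
    ∀ (n : ℕ) (i j : ℤ), 0 ≤ i → i ≤ (n : ℤ) - 1 → 0 ≤ j → j ≤ (n : ℤ) - 1 →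
      r n i j =
        (a ^ (1 + i + j) / (1 + a ^ 2)) *
          ∑ m ∈ Finset.range n,
            (m.choose i.toNat : ℂ) * (m.choose j.toNat) * ((1 + a ^ 2) ^ m)⁻¹ :=
  aztec_biased_boundary_recurrence_solution_general a r hzero hrec
end

section
/- Let n ≥ 1, let a > 0 be real, let K_a be the one-periodic Kasteleyn matrix of the Aztec diamond AD_n, and suppose L : W_n × B_n → ℂ satisfies Σ_{w∈W_n} K_a(b,w)·L(w,b′) = (1 if b = b′, else 0) for all b,b′ ∈ B_n and Σ_{b∈B_n} L(w,b)·K_a(b,w′) = (1 if w = w′, else 0) for all w,w′ ∈ W_n. Then for all 0 ≤ i,j ≤ n−1, L((2i+1,0),(0,2j+1)) = −𝚒^{i+j+1} · (a^{1+i+j}/(1+a²)) · Σ_{m=0}^{n−1} binom(m,i) · binom(m,j) · (1+a²)^{−m}. -/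
open Finset

noncomputable def aztecWhite (m : ℕ) : Finset (ℤ × ℤ) :=
  (Finset.Icc (0 : ℤ) (2 * (m : ℤ)) ×ˢ Finset.Icc (0 : ℤ) (2 * (m : ℤ))).filter
    fun p => p.1 % 2 = 1 ∧ p.2 % 2 = 0 ∧ 1 ≤ p.1 ∧ p.1 ≤ 2 * (m : ℤ) - 1 ∧
      0 ≤ p.2 ∧ p.2 ≤ 2 * (m : ℤ)

noncomputable def aztecBlack (m : ℕ) : Finset (ℤ × ℤ) :=
  (Finset.Icc (0 : ℤ) (2 * (m : ℤ)) ×ˢ Finset.Icc (0 : ℤ) (2 * (m : ℤ))).filter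
    fun p => p.1 % 2 = 0 ∧ p.2 % 2 = 1 ∧ 0 ≤ p.1 ∧ p.1 ≤ 2 * (m : ℤ) ∧
      1 ≤ p.2 ∧ p.2 ≤ 2 * (m : ℤ) - 1

/-- The one-periodic Kasteleyn matrix of the Aztec diamond: `1` on edges in direction
`±e1`, `a·𝚒` on edges in direction `±e2`, `0` otherwise. -/
noncomputable def Kbias (a : ℝ) (b w : ℤ × ℤ) : ℂ :=
  if b - w = (1, 1) ∨ b - w = (-1, -1) then 1
  else if b - w = (-1, 1) ∨ b - w = (1, -1) then (a : ℂ) * Complex.I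
  else 0

/-!
Since `L` is a left inverse of `K_a`, the column `L(·, (0, 2j+1))` is `L K_a f = f` for any `f`
with `K_a f = δ_(0, 2j+1)`, so it suffices to write such an `f` down. Put `c = a𝚒`,
`β = 1 - c² = 1 + a²` and `g(m) = binom(m, j)` for `m < n`, `g(m) = 0` for `m ≥ n`; the value of
`f` at the white vertex `(2p+1, 2q)` is `-c^(j+1-q+p) Σ_{m<n} (Δ^q g)(m) binom(m, p) / β^(m+1)`.
By Pascal's rule the Kasteleyn equation at an interior black vertex becomes a telescoping sum
over `m`; its end terms vanish because `Δ^q g` vanishes from `n` on. At the black vertices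
`(0, 2s+1)` the telescoping leaves `(Δ^s g)(0) = [s = j]`. Taking `q = 0` gives the formula.
-/

open fwdDiff

section FiniteDifferences

variable {𝕜 : Type*} [Field 𝕜]

def chooseSum (β : 𝕜) (n : ℕ) (D : ℕ → 𝕜) (p : ℕ) : 𝕜 :=
  ∑ m ∈ range n, D m * m.choose p / β ^ (m + 1)

variable {β : 𝕜} {D : ℕ → 𝕜} {n : ℕ}

theorem chooseSum_add_fwdDiff (hβ : β ≠ 0) (hD : D n = 0) (p : ℕ) :
    chooseSum β n D p + (1 - β) * chooseSum β n D (p + 1) +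
      chooseSum β n (Δ_[1] D) p + chooseSum β n (Δ_[1] D) (p + 1) = 0 := by
  set u : ℕ → 𝕜 := fun m ↦ D m * m.choose (p + 1) / β ^ m
  have hstep : ∀ m, (D m * m.choose p + (1 - β) * (D m * m.choose (p + 1)) +
      Δ_[1] D m * m.choose p + Δ_[1] D m * m.choose (p + 1)) / β ^ (m + 1) = u (m + 1) - u m := by
    intro m
    simp only [u, fwdDiff, Nat.choose_succ_succ', Nat.cast_add]
    field_simp
    ring
  simp only [chooseSum, mul_sum, ← sum_add_distrib]
  simp only [mul_div_assoc', ← add_div, hstep]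
  rw [sum_range_sub]
  simp [u, hD]

theorem chooseSum_zero_add_fwdDiff (hβ : β ≠ 0) (hD : D n = 0) :
    (1 - β) * chooseSum β n D 0 + chooseSum β n (Δ_[1] D) 0 = -D 0 := by
  set v : ℕ → 𝕜 := fun m ↦ D m / β ^ m
  have hstep : ∀ m, ((1 - β) * D m + Δ_[1] D m) / β ^ (m + 1) = v (m + 1) - v m := by
    intro m
    simp only [v, fwdDiff]
    field_simp
    ring
  simp only [chooseSum, mul_sum, ← sum_add_distrib, Nat.choose_zero_right, Nat.cast_one, mul_one]
  simp only [mul_div_assoc', ← add_div, hstep]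
  rw [sum_range_sub]
  simp [v, hD]

variable (𝕜) in
def truncatedChoose (n j m : ℕ) : 𝕜 := if m < n then (m.choose j : 𝕜) else 0

theorem fwdDiff_iter_truncatedChoose_of_le (j q : ℕ) {m : ℕ} (hm : n ≤ m) :
    (Δ_[1])^[q] (truncatedChoose 𝕜 n j) m = 0 := by
  rw [fwdDiff_iter_eq_sum_shift]
  refine sum_eq_zero fun k _ ↦ ?_
  simp [truncatedChoose, show ¬ m + k < n by omega]

theorem fwdDiff_iter_truncatedChoose_zero (j : ℕ) {s : ℕ} (hs : s < n) :
    (Δ_[1])^[s] (truncatedChoose 𝕜 n j) 0 = if s = j then 1 else 0 := by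
  have hchoose :
      (((Δ_[1])^[s] (fun x ↦ x.choose j : ℕ → ℤ) 0 : ℤ) : 𝕜) = if s = j then 1 else 0 := by
    rw [fwdDiff_iter_choose_zero]; split_ifs <;> simp
  rw [← hchoose, fwdDiff_iter_eq_sum_shift, fwdDiff_iter_eq_sum_shift, Int.cast_sum]
  refine sum_congr rfl fun k hk ↦ ?_
  have : k < n := by rw [mem_range] at hk; omega
  simp [truncatedChoose, this, zsmul_eq_mul]

def columnCoeff (n j : ℕ) (c : 𝕜) (q p : ℕ) : 𝕜 :=
  -(c ^ (j + 1) / c ^ q) * c ^ p *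
    chooseSum (1 - c ^ 2) n ((Δ_[1])^[q] (truncatedChoose 𝕜 n j)) p

variable {c : 𝕜} (j : ℕ)

theorem columnCoeff_last_eq_zero (q : ℕ) : columnCoeff n j c q n = 0 := by
  simp only [columnCoeff, chooseSum]
  rw [sum_eq_zero fun m hm ↦ by rw [Nat.choose_eq_zero_of_lt (mem_range.mp hm)]; simp]
  ring

theorem div_pow_eq_mul_div_pow_succ (hc : c ≠ 0) (k s : ℕ) :
    c ^ k / c ^ s = c * (c ^ k / c ^ (s + 1)) := by
  rw [pow_succ]; field_simp

theorem columnCoeff_interior (hc : c ≠ 0) (hβ : 1 - c ^ 2 ≠ 0) (s p : ℕ) :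
    columnCoeff n j c s p + c * columnCoeff n j c (s + 1) p +
      c * columnCoeff n j c s (p + 1) + columnCoeff n j c (s + 1) (p + 1) = 0 := by
  have h := chooseSum_add_fwdDiff hβ (fwdDiff_iter_truncatedChoose_of_le j s (le_refl n)) p
  rw [sub_sub_cancel] at h
  simp only [columnCoeff, Function.iterate_succ_apply', div_pow_eq_mul_div_pow_succ hc (j + 1) s]
  linear_combination (-(c ^ (j + 1) / c ^ (s + 1)) * c ^ (p + 1)) * h

theorem columnCoeff_boundary (hc : c ≠ 0) (hβ : 1 - c ^ 2 ≠ 0) {s : ℕ} (hs : s < n) :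
    c * columnCoeff n j c s 0 + columnCoeff n j c (s + 1) 0 = if s = j then 1 else 0 := by
  have h := chooseSum_zero_add_fwdDiff hβ (fwdDiff_iter_truncatedChoose_of_le j s (le_refl n))
  rw [sub_sub_cancel, fwdDiff_iter_truncatedChoose_zero j hs] at h
  simp only [columnCoeff, Function.iterate_succ_apply', div_pow_eq_mul_div_pow_succ hc (j + 1) s]
  split_ifs at h ⊢ with hsj
  · subst hsj
    linear_combination (-(c ^ (s + 1) / c ^ (s + 1))) * h + div_self (pow_ne_zero (s + 1) hc)
  · linear_combination (-(c ^ (j + 1) / c ^ (s + 1))) * h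

end FiniteDifferences

theorem apply_eq_of_leftInverse {α β R : Type*} [Semiring R] [DecidableEq α] [DecidableEq β]
    {W : Finset α} {B : Finset β} {K : β → α → R} {L : α → β → R}
    (hLK : ∀ w ∈ W, ∀ w' ∈ W, ∑ b ∈ B, L w b * K b w' = if w = w' then 1 else 0)
    {f : α → R} {b₀ : β} (hb₀ : b₀ ∈ B)
    (hf : ∀ b ∈ B, ∑ w ∈ W, K b w * f w = if b = b₀ then 1 else 0) {w₀ : α} (hw₀ : w₀ ∈ W) :
    L w₀ b₀ = f w₀ :=
  calc L w₀ b₀ = ∑ b ∈ B, L w₀ b * if b = b₀ then 1 else 0 := by simp [hb₀]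
    _ = ∑ b ∈ B, L w₀ b * ∑ w ∈ W, K b w * f w := sum_congr rfl fun b hb ↦ by rw [hf b hb]
    _ = ∑ w ∈ W, (∑ b ∈ B, L w₀ b * K b w) * f w := by
      simp only [mul_sum, sum_mul, mul_assoc]; exact sum_comm
    _ = ∑ w ∈ W, (if w₀ = w then 1 else 0) * f w := sum_congr rfl fun w hw ↦ by rw [hLK w₀ hw₀ w hw]
    _ = f w₀ := by simp [hw₀]

theorem mem_aztecWhite {n : ℕ} {x y : ℤ} :
    (x, y) ∈ aztecWhite n ↔
      x % 2 = 1 ∧ y % 2 = 0 ∧ 1 ≤ x ∧ x ≤ 2 * (n : ℤ) - 1 ∧ 0 ≤ y ∧ y ≤ 2 * (n : ℤ) := by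
  simp only [aztecWhite, mem_filter, mem_product, mem_Icc]
  omega

theorem mem_aztecBlack {n : ℕ} {x y : ℤ} :
    (x, y) ∈ aztecBlack n ↔
      x % 2 = 0 ∧ y % 2 = 1 ∧ 0 ≤ x ∧ x ≤ 2 * (n : ℤ) ∧ 1 ≤ y ∧ y ≤ 2 * (n : ℤ) - 1 := by
  simp only [aztecBlack, mem_filter, mem_product, mem_Icc]
  omega

theorem one_sub_sq_ofReal_mul_I (a : ℝ) :
    1 - ((a : ℂ) * Complex.I) ^ 2 = ((1 + a ^ 2 : ℝ) : ℂ) := by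
  push_cast; rw [mul_pow, Complex.I_sq]; ring

theorem Kbias_mul_eq (a : ℝ) (x y : ℤ) (f : ℤ × ℤ → ℂ) (w : ℤ × ℤ) :
    Kbias a (x, y) w * f w =
      (if w = (x - 1, y - 1) then f w else 0) + (if w = (x + 1, y + 1) then f w else 0) +
        a * Complex.I *
          ((if w = (x + 1, y - 1) then f w else 0) + (if w = (x - 1, y + 1) then f w else 0)) := by
  obtain ⟨u, v⟩ := w
  simp only [Kbias, Prod.mk_sub_mk, Prod.mk.injEq]
  split_ifs <;> first | ring1 | (exfalso; omega)

theorem sum_Kbias_mul_of_eq_zero (n : ℕ) (a : ℝ) {f : ℤ × ℤ → ℂ}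
    (hf : ∀ w ∉ aztecWhite n, f w = 0) (x y : ℤ) :
    ∑ w ∈ aztecWhite n, Kbias a (x, y) w * f w =
      f (x - 1, y - 1) + f (x + 1, y + 1) +
        a * Complex.I * (f (x + 1, y - 1) + f (x - 1, y + 1)) := by
  have hite : ∀ w, (if w ∈ aztecWhite n then f w else 0) = f w := fun w ↦ by
    split_ifs with hw
    · rfl
    · exact (hf w hw).symm
  simp only [Kbias_mul_eq, sum_add_distrib, ← mul_sum, sum_ite_eq', hite]

noncomputable def aztecColumn (n j : ℕ) (a : ℝ) (w : ℤ × ℤ) : ℂ :=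
  if w ∈ aztecWhite n then
    columnCoeff n j ((a : ℂ) * Complex.I) (w.2 / 2).toNat ((w.1 - 1) / 2).toNat
  else 0

theorem aztecColumn_eq_zero {n : ℕ} (j : ℕ) (a : ℝ) {w : ℤ × ℤ} (hw : w ∉ aztecWhite n) :
    aztecColumn n j a w = 0 := if_neg hw

theorem aztecColumn_apply {n : ℕ} (j : ℕ) (a : ℝ) {p q : ℕ} (hp : p ≤ n) (hq : q ≤ n) {x y : ℤ}
    (hx : x = 2 * p + 1) (hy : y = 2 * q) :
    aztecColumn n j a (x, y) = columnCoeff n j ((a : ℂ) * Complex.I) q p := by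
  have hpq : (y / 2).toNat = q ∧ ((x - 1) / 2).toNat = p := by omega
  rw [aztecColumn, hpq.1, hpq.2]
  split_ifs with hw
  · rfl
  · obtain rfl : p = n := by rw [mem_aztecWhite] at hw; omega
    exact (columnCoeff_last_eq_zero j q).symm

theorem sum_Kbias_mul_aztecColumn {n : ℕ} (j : ℕ) {a : ℝ} (ha : a ≠ 0) {x y : ℤ}
    (hb : (x, y) ∈ aztecBlack n) :
    ∑ w ∈ aztecWhite n, Kbias a (x, y) w * aztecColumn n j a w =
      if (x, y) = ((0 : ℤ), 2 * (j : ℤ) + 1) then 1 else 0 := by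
  have hc : (a : ℂ) * Complex.I ≠ 0 := by simp [ha]
  have hβ : 1 - ((a : ℂ) * Complex.I) ^ 2 ≠ 0 := by
    rw [one_sub_sq_ofReal_mul_I, Complex.ofReal_ne_zero]; positivity
  rw [sum_Kbias_mul_of_eq_zero n a (fun w ↦ aztecColumn_eq_zero j a)]
  rw [mem_aztecBlack] at hb
  obtain ⟨r, s, rfl, rfl, hr, hs⟩ : ∃ r s : ℕ, x = 2 * r ∧ y = 2 * s + 1 ∧ r ≤ n ∧ s < n :=
    ⟨x.toNat / 2, y.toNat / 2, by omega, by omega, by omega, by omega⟩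
  rcases r with _ | p
  · have hb₀ : ((2 * ((0 : ℕ) : ℤ), 2 * (s : ℤ) + 1) = ((0 : ℤ), 2 * (j : ℤ) + 1)) ↔ s = j := by
      simp only [Prod.mk.injEq]; omega
    rw [if_congr hb₀ rfl rfl, ← columnCoeff_boundary j hc hβ hs,
      aztecColumn_eq_zero j a (w := (2 * ((0 : ℕ) : ℤ) - 1, _)) (by rw [mem_aztecWhite]; omega),
      aztecColumn_eq_zero j a (w := (2 * ((0 : ℕ) : ℤ) - 1, _)) (by rw [mem_aztecWhite]; omega),
      aztecColumn_apply j a (p := 0) (q := s + 1) (x := 2 * ((0 : ℕ) : ℤ) + 1) (by omega) hs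
        (by omega) (by omega),
      aztecColumn_apply j a (p := 0) (q := s) (x := 2 * ((0 : ℕ) : ℤ) + 1) (by omega) hs.le
        (by omega) (by omega)]
    ring
  · have hp : p < n := by omega
    rw [if_neg (by simp only [Prod.mk.injEq]; omega),
      aztecColumn_apply j a (p := p) (q := s) (x := 2 * ((p + 1 : ℕ) : ℤ) - 1) hp.le hs.le
        (by omega) (by omega),
      aztecColumn_apply j a (p := p + 1) (q := s + 1) (x := 2 * ((p + 1 : ℕ) : ℤ) + 1) hr hs
        (by omega) (by omega),
      aztecColumn_apply j a (p := p + 1) (q := s) (x := 2 * ((p + 1 : ℕ) : ℤ) + 1) hr hs.le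
        (by omega) (by omega),
      aztecColumn_apply j a (p := p) (q := s + 1) (x := 2 * ((p + 1 : ℕ) : ℤ) - 1) hp.le hs
        (by omega) (by omega)]
    linear_combination columnCoeff_interior j hc hβ s p

theorem biased_inverse_kasteleyn_boundary_values_general
    (n : ℕ) (a : ℝ) (ha : 0 < a) (L : ℤ × ℤ → ℤ × ℤ → ℂ)
    (hLK : ∀ w ∈ aztecWhite n, ∀ w' ∈ aztecWhite n,
      ∑ b ∈ aztecBlack n, L w b * Kbias a b w' = if w = w' then 1 else 0)
    (i j : ℕ) (hi : i < n) (hj : j < n) :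
    L ((2 * (i : ℤ) + 1, 0)) ((0, 2 * (j : ℤ) + 1)) =
      -Complex.I ^ (i + j + 1) *
        ((a : ℂ) ^ (1 + i + j) / (1 + (a : ℂ) ^ 2)) *
        ∑ m ∈ Finset.range n,
          (m.choose i : ℂ) * (m.choose j) * ((1 + (a : ℂ) ^ 2) ^ m)⁻¹ := by
  have hb₀ : ((0 : ℤ), 2 * (j : ℤ) + 1) ∈ aztecBlack n := by rw [mem_aztecBlack]; omega
  have hw₀ : (2 * (i : ℤ) + 1, (0 : ℤ)) ∈ aztecWhite n := by rw [mem_aztecWhite]; omega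
  rw [apply_eq_of_leftInverse hLK hb₀ (fun b hb ↦ sum_Kbias_mul_aztecColumn j ha.ne' hb) hw₀,
    aztecColumn_apply j a hi.le (Nat.zero_le n) rfl (by simp)]
  simp only [columnCoeff, chooseSum, Function.iterate_zero, id, one_sub_sq_ofReal_mul_I,
    Complex.ofReal_add, Complex.ofReal_one, Complex.ofReal_pow, mul_sum]
  refine sum_congr rfl fun m hm ↦ ?_
  rw [truncatedChoose, if_pos (mem_range.mp hm)]
  generalize 1 + (a : ℂ) ^ 2 = β
  ring

/-- Boundary values of the inverse of the one-periodic (bias `a`)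
Kasteleyn matrix of the Aztec diamond of order `n`. -/
theorem biased_inverse_kasteleyn_boundary_values
    (n : ℕ) (hn : 1 ≤ n) (a : ℝ) (ha : 0 < a) (L : ℤ × ℤ → ℤ × ℤ → ℂ)
    (hKL : ∀ b ∈ aztecBlack n, ∀ b' ∈ aztecBlack n,
      ∑ w ∈ aztecWhite n, Kbias a b w * L w b' = if b = b' then 1 else 0)
    (hLK : ∀ w ∈ aztecWhite n, ∀ w' ∈ aztecWhite n,
      ∑ b ∈ aztecBlack n, L w b * Kbias a b w' = if w = w' then 1 else 0)
    (i j : ℕ) (hi : i < n) (hj : j < n) :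
    L ((2 * (i : ℤ) + 1, 0)) ((0, 2 * (j : ℤ) + 1)) =
      -Complex.I ^ (i + j + 1) *
        ((a : ℂ) ^ (1 + i + j) / (1 + (a : ℂ) ^ 2)) *
        ∑ m ∈ Finset.range n,
          (m.choose i : ℂ) * (m.choose j) * ((1 + (a : ℂ) ^ 2) ^ m)⁻¹ :=
  biased_inverse_kasteleyn_boundary_values_general n a ha L hLK i j hi hj
end

section
/- Let n ≥ 1 and let a, q > 0 be real. Define g on the vertices of AD_n by: for a white vertex y = (y1,y2), g(y) = q^{((y2−y1+1)/2)²} if y2 > y1 and g(y) = q^{(y2−y1+1)/2} if y1 > y2; for a black vertex x = (x1,x2), g(x) = q^{−((x2−x1+1)/2)²} if x1 < x2 and g(x) = q^{(x1−x2−1)/2} if x1 > x2. Then for all x ∈ B_n and y ∈ W_n, K_diag(x,y) = g(x)·g(y)·K_col(x,y); that is, the gauge transformation g carries the q^{col} weighting to the q^{diag} weighting. -/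
open Finset

/-- The `q^col` Kasteleyn matrix (rows: black, columns: white). -/
noncomputable def Kcol (n : ℕ) (a q : ℝ) (x y : ℤ × ℤ) : ℂ :=
  if y - x = (1, 1) ∨ y - x = (-1, -1) then 1
  else if y - x = (-1, 1) then (a : ℂ) * (q : ℂ) ^ (x.1 - 2 * (n : ℤ) - 1) * Complex.I
  else if y - x = (1, -1) then (a : ℂ) * (q : ℂ) ^ (2 * (n : ℤ) - x.1) * Complex.I
  else 0

/-- The `q^diag` Kasteleyn matrix (rows: black, columns: white). -/
noncomputable def Kdiag (n : ℕ) (a q : ℝ) (x y : ℤ × ℤ) : ℂ :=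
  if y - x = (1, 1) ∨ y - x = (-1, -1) then 1
  else if y - x = (-1, 1) then
    Complex.I * (a : ℂ) *
      (q : ℂ) ^ (-2 * min ((n : ℤ) - x.1 / 2) ((n : ℤ) - (x.2 + 1) / 2))
  else if y - x = (1, -1) then
    Complex.I * (a : ℂ) *
      (q : ℂ) ^ (2 * min ((n : ℤ) - x.1 / 2 - 1) ((n : ℤ) - (x.2 + 1) / 2) + 1)
  else 0

/-- The gauge function: on white vertices `y`, `q^{((y2−y1+1)/2)²}` if `y2 > y1` and
`q^{(y2−y1+1)/2}` if `y1 > y2`; on black vertices `x`, `q^{−((x2−x1+1)/2)²}` if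
`x1 < x2` and `q^{(x1−x2−1)/2}` if `x1 > x2`.  (First coordinate odd means white.) -/
noncomputable def gaugeFun (q : ℝ) (p : ℤ × ℤ) : ℂ :=
  if p.1 % 2 = 1 then
    (if p.1 < p.2 then (q : ℂ) ^ (((p.2 - p.1 + 1) / 2) ^ 2)
     else (q : ℂ) ^ ((p.2 - p.1 + 1) / 2))
  else
    (if p.1 < p.2 then (q : ℂ) ^ (-(((p.2 - p.1 + 1) / 2) ^ 2))
     else (q : ℂ) ^ ((p.1 - p.2 - 1) / 2))

/-!
Every vertex `p` of either colour lies on the diagonal `p₂ - p₁ = 2d - 1` for an integer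
`d = diagIndex p`, and the gauge is `q^{φ(d)}` on white and `q^{-φ(d)}` on black vertices,
where `φ(d) = d²` for `d > 0` and `φ(d) = d` otherwise. An edge along `±e₁` stays on its
diagonal, so the gauge factors cancel. An edge along `±e₂` moves to a neighbouring diagonal and
multiplies the weight by `q^{φ(d+1) - φ(d)} = q^{2 max(0,d) + 1}`, which is exactly the ratio
of the `q^diag` to the `q^col` weight of that edge.
-/

def diagIndex (p : ℤ × ℤ) : ℤ := (p.2 - p.1 + 1) / 2

def gaugeExponent (d : ℤ) : ℤ := if 0 < d then d ^ 2 else d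

lemma gaugeExponent_succ (d : ℤ) :
    gaugeExponent (d + 1) = gaugeExponent d + 2 * max 0 d + 1 := by
  unfold gaugeExponent
  rcases lt_trichotomy d 0 with hd | rfl | hd
  · rw [if_neg (by omega), if_neg hd.not_gt, max_eq_left hd.le]
    ring
  · norm_num
  · rw [if_pos (by omega), if_pos hd, max_eq_right hd.le]
    ring

lemma gaugeFun_of_white (q : ℝ) {y : ℤ × ℤ} (hy₁ : y.1 % 2 = 1) (hy₂ : y.2 % 2 = 0) :
    gaugeFun q y = (q : ℂ) ^ gaugeExponent (diagIndex y) := by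
  have hlt : y.1 < y.2 ↔ 0 < diagIndex y := by unfold diagIndex; omega
  unfold gaugeFun gaugeExponent
  rw [if_pos hy₁]
  by_cases hd : 0 < diagIndex y
  · rw [if_pos (hlt.mpr hd), if_pos hd]
    rfl
  · rw [if_neg (mt hlt.mp hd), if_neg hd]
    rfl

lemma gaugeFun_of_black (q : ℝ) {x : ℤ × ℤ} (hx₁ : x.1 % 2 = 0) (hx₂ : x.2 % 2 = 1) :
    gaugeFun q x = (q : ℂ) ^ (-gaugeExponent (diagIndex x)) := by
  have hlt : x.1 < x.2 ↔ 0 < diagIndex x := by unfold diagIndex; omega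
  have hneg : (x.1 - x.2 - 1) / 2 = -diagIndex x := by unfold diagIndex; omega
  unfold gaugeFun gaugeExponent
  rw [if_neg (by omega), hneg]
  by_cases hd : 0 < diagIndex x
  · rw [if_pos (hlt.mpr hd), if_pos hd]
    rfl
  · rw [if_neg (mt hlt.mp hd), if_neg hd]

lemma prod_sub_eq_mk_iff {α β : Type*} [AddCommGroup α] [AddCommGroup β] {x y : α × β}
    {u : α} {v : β} : y - x = (u, v) ↔ y.1 = x.1 + u ∧ y.2 = x.2 + v := by
  rw [Prod.ext_iff, Prod.fst_sub, Prod.snd_sub, sub_eq_iff_eq_add', sub_eq_iff_eq_add']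

lemma zpow_mul_mul_zpow_mul {K : Type*} [Field K] {q : K} (hq : q ≠ 0) (a c : K) (e f : ℤ) :
    q ^ e * (a * q ^ f * c) = c * a * q ^ (e + f) := by
  rw [zpow_add₀ hq]
  ring

theorem Kdiag_eq_gaugeFun_mul_Kcol (n : ℕ) (a : ℝ) {q : ℝ} (hq : q ≠ 0) {x y : ℤ × ℤ}
    (hx₁ : x.1 % 2 = 0) (hx₂ : x.2 % 2 = 1) (hy₁ : y.1 % 2 = 1) (hy₂ : y.2 % 2 = 0) :
    Kdiag n a q x y = gaugeFun q x * gaugeFun q y * Kcol n a q x y := by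
  have hq' : (q : ℂ) ≠ 0 := Complex.ofReal_ne_zero.mpr hq
  have hdx : diagIndex x = (x.2 - x.1 + 1) / 2 := rfl
  have hdy : diagIndex y = (y.2 - y.1 + 1) / 2 := rfl
  rw [gaugeFun_of_black q hx₁ hx₂, gaugeFun_of_white q hy₁ hy₂, ← zpow_add₀ hq']
  unfold Kdiag Kcol
  split_ifs with he₁ he₂ he₃
  · have hsame : diagIndex y = diagIndex x := by
      rcases he₁ with h | h <;> rw [prod_sub_eq_mk_iff] at h <;> omega
    rw [hsame, neg_add_cancel, zpow_zero, mul_one]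
  · rw [zpow_mul_mul_zpow_mul hq']
    have hstep : diagIndex y = diagIndex x + 1 := by rw [prod_sub_eq_mk_iff] at he₂; omega
    have hsucc := gaugeExponent_succ (diagIndex x)
    rw [hstep]
    congr 2
    omega
  · rw [zpow_mul_mul_zpow_mul hq']
    have hstep : diagIndex x = diagIndex y + 1 := by rw [prod_sub_eq_mk_iff] at he₃; omega
    have hsucc := gaugeExponent_succ (diagIndex y)
    rw [hstep]
    congr 2
    omega
  · rw [mul_zero]

theorem qcol_gauge_equivalent_qdiag_general (n : ℕ) (a q : ℝ)
    (hq : 0 < q) :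
    ∀ x ∈ aztecBlack n, ∀ y ∈ aztecWhite n,
      Kdiag n a q x y = gaugeFun q x * gaugeFun q y * Kcol n a q x y := by
  intro x hx y hy
  simp only [aztecBlack, aztecWhite, Finset.mem_filter] at hx hy
  exact Kdiag_eq_gaugeFun_mul_Kcol n a hq.ne' hx.2.1 hx.2.2.1 hy.2.1 hy.2.2.1

/-- The gauge transformation carrying the `q^col` weighting to the
`q^diag` weighting of the Aztec diamond of order `n`. -/
theorem qcol_gauge_equivalent_qdiag (n : ℕ) (hn : 1 ≤ n) (a q : ℝ)
    (ha : 0 < a) (hq : 0 < q) :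
    ∀ x ∈ aztecBlack n, ∀ y ∈ aztecWhite n,
      Kdiag n a q x y = gaugeFun q x * gaugeFun q y * Kcol n a q x y :=
  qcol_gauge_equivalent_qdiag_general n a q hq
end

section
/- Let a, q > 0 be real, n ≥ 1, and 0 ≤ i,j ≤ n−1. Let Z^{col}_n(a) be the partition function of AD_n with the q^{col} edge weights and Z^{col}(i,j,a,n) the partition function of the same weighted graph with the vertices (2n−2i−1,2n) and (2n,2n−2j−1) deleted; let Z^{diag}_n(a) and Z^{diag}(i,j,a,n) be the analogous partition functions for the q^{diag} edge weights with parameter a. Then q^{(i+1)²+j} · Z^{diag}(i,j,a,n) · Z^{col}_n(a) = Z^{col}(i,j,a,n) · Z^{diag}_n(a). -/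
open Finset

noncomputable def aztecEdges (m : ℕ) : Finset ((ℤ × ℤ) × (ℤ × ℤ)) :=
  (aztecBlack m ×ˢ aztecWhite m).filter fun p =>
    p.1 - p.2 = (1, 1) ∨ p.1 - p.2 = (-1, -1) ∨ p.1 - p.2 = (-1, 1) ∨ p.1 - p.2 = (1, -1)

/-- A perfect matching of the Aztec diamond of order `m` with the vertices in `D` deleted. -/
def IsAztecMatching (m : ℕ) (D : Finset (ℤ × ℤ))
    (M : Finset ((ℤ × ℤ) × (ℤ × ℤ))) : Prop :=
  M ⊆ aztecEdges m ∧
  (∀ p ∈ M, p.1 ∉ D ∧ p.2 ∉ D) ∧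
  (∀ b ∈ aztecBlack m \ D, (M.filter fun p => p.1 = b).card = 1) ∧
  (∀ w ∈ aztecWhite m \ D, (M.filter fun p => p.2 = w).card = 1)

noncomputable def aztecMatchings (m : ℕ) (D : Finset (ℤ × ℤ)) :
    Finset (Finset ((ℤ × ℤ) × (ℤ × ℤ))) := by
  classical exact (aztecEdges m).powerset.filter (IsAztecMatching m D)

noncomputable def aztecNum (m : ℕ) (D : Finset (ℤ × ℤ)) : ℕ := (aztecMatchings m D).card

noncomputable def aztecZ (m : ℕ) (D : Finset (ℤ × ℤ))
    (wt : (ℤ × ℤ) × (ℤ × ℤ) → ℝ) : ℝ :=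
  ∑ M ∈ aztecMatchings m D, ∏ p ∈ M, wt p

/-- The `q^diag` edge weights of `AD_m` with parameter `α`: for a black vertex
`x = p.1`, the edges in direction `±e1` have weight `1`, the edge to `x + e2` has
weight `α·q^{−2·min(m−x1/2, m−(x2+1)/2)}`, and the edge to `x − e2` has weight
`α·q^{2·min(m−x1/2−1, m−(x2+1)/2)+1}`.  (`p = (black, white)`.) -/
noncomputable def wtDiag (m : ℕ) (α q : ℝ) (p : (ℤ × ℤ) × (ℤ × ℤ)) : ℝ :=
  if p.2 - p.1 = (1, 1) ∨ p.2 - p.1 = (-1, -1) then 1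
  else if p.2 - p.1 = (-1, 1) then
    α * q ^ (-2 * min ((m : ℤ) - p.1.1 / 2) ((m : ℤ) - (p.1.2 + 1) / 2))
  else if p.2 - p.1 = (1, -1) then
    α * q ^ (2 * min ((m : ℤ) - p.1.1 / 2 - 1) ((m : ℤ) - (p.1.2 + 1) / 2) + 1)
  else 0

/-- The `q^col` edge weights of `AD_n`: for a black vertex `x = p.1`, the edges in
direction `±e1` have weight `1`, the edge to `x + e2` has weight `a·q^{x1−2n−1}`, and
the edge to `x − e2` has weight `a·q^{2n−x1}`.  (`p = (black, white)`.) -/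
noncomputable def wtCol (n : ℕ) (a q : ℝ) (p : (ℤ × ℤ) × (ℤ × ℤ)) : ℝ :=
  if p.2 - p.1 = (1, 1) ∨ p.2 - p.1 = (-1, -1) then 1
  else if p.2 - p.1 = (-1, 1) then a * q ^ (p.1.1 - 2 * (n : ℤ) - 1)
  else if p.2 - p.1 = (1, -1) then a * q ^ (2 * (n : ℤ) - p.1.1)
  else 0

/-!
The `q^diag` weights are a gauge transform of the `q^col` weights: there is an integer
`gaugeExp x` for every vertex `x` such that each edge weight `wtDiag p` equals `wtCol p` times
`q ^ gaugeExp b * q ^ gaugeExp w` for its endpoints `b`, `w`. Every perfect matching covers each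
surviving vertex exactly once, so both partition functions of the same region differ by the
product of the vertex factors over the region. Comparing the region with the two corner vertices
deleted to the full diamond, everything cancels except the factors of the two deleted vertices,
whose product is `q ^ ((i + 1) ^ 2 + j)`.
-/

theorem aztecBlack_disjoint_aztecWhite (m : ℕ) : Disjoint (aztecBlack m) (aztecWhite m) := by
  rw [Finset.disjoint_left]
  intro x hb hw
  simp only [aztecBlack, aztecWhite, Finset.mem_filter] at hb hw
  omega

section Gauge

variable {m : ℕ} {D : Finset (ℤ × ℤ)}

namespace IsAztecMatching

variable {M : Finset ((ℤ × ℤ) × (ℤ × ℤ))} {β : Type*} [CommMonoid β]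

theorem prod_fst (hM : IsAztecMatching m D M) (f : ℤ × ℤ → β) :
    ∏ p ∈ M, f p.1 = ∏ b ∈ aztecBlack m \ D, f b := by
  obtain ⟨hsub, hD, hdeg, -⟩ := hM
  have hmaps : ∀ p ∈ M, p.1 ∈ aztecBlack m \ D := fun p hp =>
    Finset.mem_sdiff.mpr ⟨(Finset.mem_product.mp (Finset.mem_filter.mp (hsub hp)).1).1, (hD p hp).1⟩
  rw [← Finset.prod_fiberwise_of_maps_to' hmaps]
  refine Finset.prod_congr rfl fun b hb => ?_
  rw [Finset.prod_const, hdeg b hb, pow_one]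

theorem prod_snd (hM : IsAztecMatching m D M) (f : ℤ × ℤ → β) :
    ∏ p ∈ M, f p.2 = ∏ w ∈ aztecWhite m \ D, f w := by
  obtain ⟨hsub, hD, -, hdeg⟩ := hM
  have hmaps : ∀ p ∈ M, p.2 ∈ aztecWhite m \ D := fun p hp =>
    Finset.mem_sdiff.mpr ⟨(Finset.mem_product.mp (Finset.mem_filter.mp (hsub hp)).1).2, (hD p hp).2⟩
  rw [← Finset.prod_fiberwise_of_maps_to' hmaps]
  refine Finset.prod_congr rfl fun w hw => ?_
  rw [Finset.prod_const, hdeg w hw, pow_one]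

end IsAztecMatching

variable (c : ℤ × ℤ → ℝ) {wt wt' : (ℤ × ℤ) × (ℤ × ℤ) → ℝ}

theorem aztecZ_eq_gauge_mul (hc : ∀ p ∈ aztecEdges m, wt p = c p.1 * c p.2 * wt' p) :
    aztecZ m D wt =
      (∏ b ∈ aztecBlack m \ D, c b) * (∏ w ∈ aztecWhite m \ D, c w) * aztecZ m D wt' := by
  classical
  unfold aztecZ
  rw [Finset.mul_sum]
  refine Finset.sum_congr rfl fun M hM => ?_
  have hM : IsAztecMatching m D M := (Finset.mem_filter.mp hM).2
  rw [Finset.prod_congr rfl fun p hp => hc p (hM.1 hp), Finset.prod_mul_distrib,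
    Finset.prod_mul_distrib, hM.prod_fst, hM.prod_snd]

theorem gauge_mul_aztecZ_pair_mul_aztecZ (hc : ∀ p ∈ aztecEdges m, wt p = c p.1 * c p.2 * wt' p)
    {w b : ℤ × ℤ} (hw : w ∈ aztecWhite m) (hb : b ∈ aztecBlack m) :
    c w * c b * aztecZ m {w, b} wt * aztecZ m ∅ wt' = aztecZ m {w, b} wt' * aztecZ m ∅ wt := by
  have hwb : w ∉ aztecBlack m := Finset.disjoint_right.mp (aztecBlack_disjoint_aztecWhite m) hw
  have hbw : b ∉ aztecWhite m := Finset.disjoint_left.mp (aztecBlack_disjoint_aztecWhite m) hb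
  have hblack : aztecBlack m \ {w, b} = (aztecBlack m).erase b := by
    rw [Finset.sdiff_insert_of_notMem hwb, Finset.sdiff_singleton_eq_erase]
  have hwhite : aztecWhite m \ {w, b} = (aztecWhite m).erase w := by
    rw [Finset.sdiff_insert, Finset.sdiff_singleton_eq_erase, Finset.erase_eq_of_notMem hbw]
  rw [aztecZ_eq_gauge_mul c hc, aztecZ_eq_gauge_mul c hc, hblack, hwhite, Finset.sdiff_empty,
    Finset.sdiff_empty, ← Finset.mul_prod_erase _ c hb, ← Finset.mul_prod_erase _ c hw]
  ring

end Gauge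

/-- A discrete antiderivative of `d ↦ max 1 (1 - 2 * d)`, the gap between the `q^col` and `q^diag`
exponents of an `e2`-edge crossing from diagonal `d` to diagonal `d + 1`. -/
def diagonalGaugeExp (d : ℤ) : ℤ := if 0 ≤ d then d else 2 * d - d ^ 2

theorem diagonalGaugeExp_add_one_sub (d : ℤ) :
    diagonalGaugeExp (d + 1) - diagonalGaugeExp d = max 1 (1 - 2 * d) := by
  unfold diagonalGaugeExp
  rcases lt_trichotomy d (-1) with h | rfl | h
  · rw [if_neg (by omega), if_neg (by omega), max_eq_right (by omega)]
    ring
  · norm_num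
  · rw [if_pos (by omega), if_pos (by omega), max_eq_left (by omega)]
    ring

/-- `(x.1 - x.2 + 1) / 2` indexes the diagonal of `x` in direction `e1`; the colour sign makes
the factors of the two endpoints of an `e1`-edge cancel. -/
def gaugeExp (x : ℤ × ℤ) : ℤ :=
  if x.1 % 2 = 0 then diagonalGaugeExp ((x.1 - x.2 + 1) / 2)
  else -diagonalGaugeExp ((x.1 - x.2 + 1) / 2)

theorem wtDiag_eq_gauge_mul_wtCol {n : ℕ} {a q : ℝ} (hq : q ≠ 0) {p : (ℤ × ℤ) × (ℤ × ℤ)}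
    (hp : p ∈ aztecEdges n) :
    wtDiag n a q p = q ^ gaugeExp p.1 * q ^ gaugeExp p.2 * wtCol n a q p := by
  obtain ⟨⟨b1, b2⟩, ⟨w1, w2⟩⟩ := p
  simp only [aztecEdges, aztecBlack, aztecWhite, Finset.mem_filter, Finset.mem_product,
    Finset.mem_Icc, Prod.mk_sub_mk, Prod.mk.injEq] at hp
  rw [← zpow_add₀ hq]
  obtain ⟨⟨hb, hw⟩, hdir⟩ := hp
  obtain ⟨d, hd⟩ : ∃ d, (b1 - b2 + 1) / 2 = d := ⟨_, rfl⟩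
  rcases hdir with ⟨h1, h2⟩ | ⟨h1, h2⟩ | ⟨h1, h2⟩ | ⟨h1, h2⟩
  · obtain ⟨rfl, rfl⟩ : w1 = b1 - 1 ∧ w2 = b2 - 1 := by omega
    simp only [wtCol, wtDiag, gaugeExp, Prod.mk_sub_mk, Prod.mk.injEq]
    split_ifs <;> try omega
    rw [show (b1 - 1 - (b2 - 1) + 1) / 2 = d by omega, hd, add_neg_cancel, zpow_zero, one_mul]
  · obtain ⟨rfl, rfl⟩ : w1 = b1 + 1 ∧ w2 = b2 + 1 := by omega
    simp only [wtCol, wtDiag, gaugeExp, Prod.mk_sub_mk, Prod.mk.injEq]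
    split_ifs <;> try omega
    rw [show (b1 + 1 - (b2 + 1) + 1) / 2 = d by omega, hd, add_neg_cancel, zpow_zero, one_mul]
  · obtain ⟨rfl, rfl⟩ : w1 = b1 + 1 ∧ w2 = b2 - 1 := by omega
    simp only [wtCol, wtDiag, gaugeExp, Prod.mk_sub_mk, Prod.mk.injEq]
    split_ifs <;> try omega
    rw [hd, show (b1 + 1 - (b2 - 1) + 1) / 2 = d + 1 by omega, mul_left_comm, ← zpow_add₀ hq]
    have hstep := diagonalGaugeExp_add_one_sub d
    congr 2
    rw [max_def] at hstep
    rw [min_def]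
    split_ifs at hstep ⊢ <;> omega
  · obtain ⟨rfl, rfl⟩ : w1 = b1 - 1 ∧ w2 = b2 + 1 := by omega
    simp only [wtCol, wtDiag, gaugeExp, Prod.mk_sub_mk, Prod.mk.injEq]
    split_ifs <;> try omega
    rw [hd, show (b1 - 1 - (b2 + 1) + 1) / 2 = d - 1 by omega, mul_left_comm, ← zpow_add₀ hq]
    have hstep := diagonalGaugeExp_add_one_sub (d - 1)
    rw [sub_add_cancel] at hstep
    congr 2
    rw [max_def] at hstep
    rw [min_def]
    split_ifs at hstep ⊢ <;> omega

theorem gaugeExp_corners (n i j : ℕ) :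
    gaugeExp (2 * (n : ℤ) - 2 * i - 1, 2 * (n : ℤ)) +
        gaugeExp (2 * (n : ℤ), 2 * (n : ℤ) - 2 * j - 1) = (((i + 1) ^ 2 + j : ℕ) : ℤ) := by
  have hodd : ¬(2 * (n : ℤ) - 2 * i - 1) % 2 = 0 := by omega
  have heven : 2 * (n : ℤ) % 2 = 0 := by omega
  have hdw : (2 * (n : ℤ) - 2 * i - 1 - 2 * n + 1) / 2 = -i := by omega
  have hdb : (2 * (n : ℤ) - (2 * n - 2 * j - 1) + 1) / 2 = j + 1 := by omega
  simp only [gaugeExp, hodd, heven, hdw, hdb, if_true, if_false, diagonalGaugeExp]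
  rw [if_pos (by omega : (0 : ℤ) ≤ j + 1)]
  split_ifs with hi
  · obtain rfl : i = 0 := by omega
    push_cast
    ring
  · push_cast
    ring

theorem qcol_qdiag_partition_relation_general (a q : ℝ) (hq : 0 < q)
    (n : ℕ) (i j : ℕ) (hi : i < n) (hj : j < n) :
    q ^ ((i + 1) ^ 2 + j) *
        aztecZ n {((2 * (n : ℤ) - 2 * i - 1), 2 * (n : ℤ)),
                  ((2 * (n : ℤ)), 2 * (n : ℤ) - 2 * j - 1)} (wtDiag n a q) *
        aztecZ n ∅ (wtCol n a q) =
      aztecZ n {((2 * (n : ℤ) - 2 * i - 1), 2 * (n : ℤ)),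
                ((2 * (n : ℤ)), 2 * (n : ℤ) - 2 * j - 1)} (wtCol n a q) *
        aztecZ n ∅ (wtDiag n a q) := by
  have hw : (2 * (n : ℤ) - 2 * i - 1, 2 * (n : ℤ)) ∈ aztecWhite n := by
    simp only [aztecWhite, Finset.mem_filter, Finset.mem_product, Finset.mem_Icc]
    omega
  have hb : (2 * (n : ℤ), 2 * (n : ℤ) - 2 * j - 1) ∈ aztecBlack n := by
    simp only [aztecBlack, Finset.mem_filter, Finset.mem_product, Finset.mem_Icc]
    omega
  have key := gauge_mul_aztecZ_pair_mul_aztecZ (fun x => q ^ gaugeExp x)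
    (wt := wtDiag n a q) (wt' := wtCol n a q)
    (fun _ hp => wtDiag_eq_gauge_mul_wtCol hq.ne' hp) hw hb
  rwa [← zpow_add₀ hq.ne', gaugeExp_corners, zpow_natCast] at key

/-- Relation between the `q^col` and `q^diag` partition functions
with two deleted boundary vertices:
`q^{(i+1)²+j} · Z^diag(i,j,a,n) · Z^col_n(a) = Z^col(i,j,a,n) · Z^diag_n(a)`. -/
theorem qcol_qdiag_partition_relation (a q : ℝ) (ha : 0 < a) (hq : 0 < q)
    (n : ℕ) (hn : 1 ≤ n) (i j : ℕ) (hi : i < n) (hj : j < n) :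
    q ^ ((i + 1) ^ 2 + j) *
        aztecZ n {((2 * (n : ℤ) - 2 * i - 1), 2 * (n : ℤ)),
                  ((2 * (n : ℤ)), 2 * (n : ℤ) - 2 * j - 1)} (wtDiag n a q) *
        aztecZ n ∅ (wtCol n a q) =
      aztecZ n {((2 * (n : ℤ) - 2 * i - 1), 2 * (n : ℤ)),
                ((2 * (n : ℤ)), 2 * (n : ℤ) - 2 * j - 1)} (wtCol n a q) *
        aztecZ n ∅ (wtDiag n a q) :=
  qcol_qdiag_partition_relation_general a q hq n i j hi hj
end
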